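/- Let H ∈ ℝ^{n×n} be a positive semi-definite Hankel matrix of rank r whose last column is linearly independent of the first n−1 columns. Then the leading (r−1)×(r−1) principal submatrix H(1:r−1,1:r−1) is positive definite. -/

import Mathlib

/-!
Identify `Fin n → ℝ` with the polynomials of degree `< n`, so that `xᵀ H y = L (p * q)` for the
moment functional `L : X ^ k ↦ h k`. If `p ≠ 0` of degree `k` lies in the kernel of a positive
semidefinite Hankel matrix `H` and `k + 2 < n`, then `L (X p * X p) = L (X ^ 2 p * p) = 0`, so `X p`
is in the kernel as well. Hence the kernel contains `q p` for all `q` of degree `< n - 1 - k`, it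
has dimension at least `n - 1 - k`, and `rank H ≤ k + 1`. A nonzero null vector of the leading
`m × m` block would be such a `p` with `k < m`, which is impossible once `m < rank H`.
-/

open Polynomial

namespace Matrix

def hankel {R : Type*} (n : ℕ) (h : ℕ → R) : Matrix (Fin n) (Fin n) R :=
  of fun i j => h (i + j)

lemma isHermitian_hankel {R : Type*} [Star R] [TrivialStar R] (n : ℕ) (h : ℕ → R) :
    (hankel n h).IsHermitian := by
  ext i j
  simp [hankel, add_comm]

end Matrix

open Matrix

namespace Polynomial

variable {R : Type*} [CommSemiring R]

noncomputable def momentFunctional (h : ℕ → R) : R[X] →ₗ[R] R :=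
  lsum fun k => LinearMap.mulRight R (h k)

@[simp]
lemma momentFunctional_monomial (h : ℕ → R) (k : ℕ) (a : R) :
    momentFunctional h (monomial k a) = a * h k := by
  simp [momentFunctional]

noncomputable def truncCoeffs (n : ℕ) : R[X] →ₗ[R] Fin n → R :=
  LinearMap.pi fun i => lcoeff R i

@[simp]
lemma truncCoeffs_apply (n : ℕ) (p : R[X]) (i : Fin n) : truncCoeffs n p i = p.coeff i :=
  rfl

lemma X_pow_mem_degreeLT (a : ℕ) : (X ^ a : R[X]) ∈ degreeLT R (a + 1) :=
  mem_degreeLT.mpr <| (degree_X_pow_le a).trans_lt <| WithBot.coe_lt_coe.mpr a.lt_succ_self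

lemma mul_mem_degreeLT {p q : R[X]} {a b : ℕ} (hq : q ∈ degreeLT R a)
    (hab : a + p.natDegree ≤ b) : q * p ∈ degreeLT R b := by
  refine mem_degreeLT.mpr <| (degree_mul_le q p).trans_lt ?_
  calc q.degree + p.degree ≤ q.degree + p.natDegree := by gcongr; exact degree_le_natDegree
    _ < a + p.natDegree := WithBot.add_lt_add_right WithBot.coe_ne_bot (mem_degreeLT.mp hq)
    _ ≤ b := by exact_mod_cast hab

lemma eq_sum_fin_monomial {n : ℕ} {p : R[X]} (hp : p ∈ degreeLT R n) :
    p = ∑ i : Fin n, monomial i (p.coeff i) :=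
  ((sum_fin (monomial ·) (by simp) (mem_degreeLT.mp hp)).trans p.sum_monomial_eq).symm

lemma truncCoeffs_dotProduct_hankel_mulVec {n : ℕ} (h : ℕ → R) {p q : R[X]}
    (hq : q ∈ degreeLT R n) (hp : p ∈ degreeLT R n) :
    truncCoeffs n q ⬝ᵥ (hankel n h *ᵥ truncCoeffs n p) = momentFunctional h (q * p) := by
  conv_rhs => rw [eq_sum_fin_monomial hq, eq_sum_fin_monomial hp]
  simp only [Finset.sum_mul_sum, monomial_mul_monomial, map_sum, momentFunctional_monomial]
  simp only [dotProduct, mulVec, hankel, Finset.mul_sum, of_apply, truncCoeffs_apply]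
  exact Finset.sum_congr rfl fun i _ => Finset.sum_congr rfl fun j _ => by ring

end Polynomial

section PosSemidef

variable {n : ℕ} {h : ℕ → ℝ}

lemma hankel_mulVec_truncCoeffs_X_mul (hH : (hankel n h).PosSemidef) {p : ℝ[X]}
    (hp : p.natDegree + 2 < n) (hker : hankel n h *ᵥ truncCoeffs n p = 0) :
    hankel n h *ᵥ truncCoeffs n (X * p) = 0 := by
  have hmem : ∀ a ≤ 2, X ^ a * p ∈ degreeLT ℝ n := fun a ha =>
    mul_mem_degreeLT (X_pow_mem_degreeLT a) (by omega)
  have hp₀ : p ∈ degreeLT ℝ n := by simpa using hmem 0 (by omega)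
  have hp₁ : X * p ∈ degreeLT ℝ n := by simpa using hmem 1 (by omega)
  rw [← hH.dotProduct_mulVec_zero_iff, star_trivial,
    truncCoeffs_dotProduct_hankel_mulVec h hp₁ hp₁, show X * p * (X * p) = X ^ 2 * p * p by ring,
    ← truncCoeffs_dotProduct_hankel_mulVec h (hmem 2 le_rfl) hp₀, hker, dotProduct_zero]

lemma hankel_mulVec_truncCoeffs_mul_eq_zero (hH : (hankel n h).PosSemidef) {p q : ℝ[X]} {m : ℕ}
    (hm : m + p.natDegree < n) (hq : q ∈ degreeLT ℝ m)
    (hker : hankel n h *ᵥ truncCoeffs n p = 0) :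
    hankel n h *ᵥ truncCoeffs n (q * p) = 0 := by
  have hX_pow : ∀ t < m, hankel n h *ᵥ truncCoeffs n (X ^ t * p) = 0 := by
    intro t ht
    induction t with
    | zero => simpa using hker
    | succ t ih =>
      rw [pow_succ', mul_assoc]
      refine hankel_mulVec_truncCoeffs_X_mul hH ?_ (ih (by omega))
      have := natDegree_mul_le (p := X ^ t) (q := p)
      have := natDegree_X_pow_le (R := ℝ) t
      omega
  classical
  rw [degreeLT_eq_span_X_pow] at hq
  refine (Submodule.span_le (p := LinearMap.ker
    ((hankel n h).mulVecLin ∘ₗ truncCoeffs n ∘ₗ LinearMap.mulRight ℝ p))).mpr ?_ hq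
  simp only [Finset.coe_image, Finset.coe_range, Set.image_subset_iff]
  exact hX_pow

lemma rank_hankel_le_of_mulVec_eq_zero (hH : (hankel n h).PosSemidef) {p : ℝ[X]} (hp₀ : p ≠ 0)
    (hpn : p.natDegree < n) (hker : hankel n h *ᵥ truncCoeffs n p = 0) :
    (hankel n h).rank ≤ p.natDegree + 1 := by
  set m := n - 1 - p.natDegree
  let Φ : degreeLT ℝ m →ₗ[ℝ] LinearMap.ker (hankel n h).mulVecLin :=
    (truncCoeffs n ∘ₗ LinearMap.mulRight ℝ p ∘ₗ (degreeLT ℝ m).subtype).codRestrict _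
      fun q => hankel_mulVec_truncCoeffs_mul_eq_zero hH (by omega) q.2 hker
  have hΦ : Function.Injective Φ := by
    rw [← LinearMap.ker_eq_bot, LinearMap.ker_eq_bot']
    rintro ⟨q, hq⟩ hΦq
    have hqp : q * p = 0 := (degreeLTEquiv_eq_zero_iff_eq_zero
      (mul_mem_degreeLT hq (by omega))).mp (congrArg Subtype.val hΦq)
    simpa [hp₀] using hqp
  have hker_dim : m ≤ Module.finrank ℝ (LinearMap.ker (hankel n h).mulVecLin) := by
    simpa [(degreeLTEquiv ℝ m).finrank_eq] using LinearMap.finrank_le_finrank_of_injective hΦ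
  have hrank_nullity := LinearMap.finrank_range_add_finrank_ker (hankel n h).mulVecLin
  rw [Module.finrank_fin_fun] at hrank_nullity
  rw [Matrix.rank]
  omega

lemma posDef_hankel_of_lt_rank (hH : (hankel n h).PosSemidef) {m : ℕ}
    (hm : m < (hankel n h).rank) : (hankel m h).PosDef := by
  refine posDef_iff_dotProduct_mulVec.mpr ⟨isHermitian_hankel m h, fun x hx => ?_⟩
  have hmn : m ≤ n := hm.le.trans (rank_le_width _)
  set p : ℝ[X] := ((degreeLTEquiv ℝ m).symm x : ℝ[X])
  have hpm : p ∈ degreeLT ℝ m := ((degreeLTEquiv ℝ m).symm x).2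
  have hpx : truncCoeffs m p = x := (degreeLTEquiv ℝ m).apply_symm_apply x
  have hp₀ : p ≠ 0 := fun hp => hx (by rw [← hpx, hp, map_zero])
  have hpn : p ∈ degreeLT ℝ n := degreeLT_mono hmn hpm
  have hpdeg : p.natDegree < m := (natDegree_lt_iff_degree_lt hp₀).mpr (mem_degreeLT.mp hpm)
  rw [star_trivial, ← hpx, truncCoeffs_dotProduct_hankel_mulVec h hpm hpm,
    ← truncCoeffs_dotProduct_hankel_mulVec h hpn hpn]
  refine (hH.dotProduct_mulVec_nonneg _).lt_of_ne' fun hzero => ?_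
  have hker : hankel n h *ᵥ truncCoeffs n p = 0 := (hH.dotProduct_mulVec_zero_iff _).mp hzero
  have := rank_hankel_le_of_mulVec_eq_zero hH hp₀ (by omega) hker
  omega

end PosSemidef

theorem stmt11 (n r : ℕ) (h : ℕ → ℝ)
    (H : Matrix (Fin n) (Fin n) ℝ)
    (hH : ∀ i j, H i j = h ((i : ℕ) + (j : ℕ)))
    (hpsd : H.PosSemidef) (hrank : H.rank = r) :
    (Matrix.of fun i j : Fin (r - 1) => h ((i : ℕ) + (j : ℕ))).PosDef := by
  obtain rfl : H = hankel n h := Matrix.ext hH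
  rcases Nat.eq_zero_or_pos r with rfl | hr
  · show (hankel 0 h).PosDef
    exact posDef_iff_dotProduct_mulVec.mpr
      ⟨isHermitian_hankel 0 h, fun x hx => absurd (Subsingleton.elim x 0) hx⟩
  · exact posDef_hankel_of_lt_rank hpsd (by omega)
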